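/- Let s > 1/2 and let Z_{N−1} denote the Nth roots of unity on the unit circle with one point removed. With B̃_{2s}(cos φ) = 2 Σ_{ℓ=1}^∞ cos(ℓφ)/(1+ℓ²)^s, the squared worst-case error for W_2^s(S¹) satisfies wce(Q[Z_{N−1}]; W_2^s)² = (2N(N−2)/(N−1)²) Σ_{ν=1}^∞ (1+ν²N²)^{−s} + B̃_{2s}(1)/(N−1)². In particular, for s > 1 there are constants 0 < c ≤ C with c/N ≤ wce(Q[Z_{N−1}]; W_2^s) ≤ C/N for all N ≥ 3, so (Z_{N−1}) is not a QMC design sequence for W_2^s(S¹) when s > 1. -/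

import Mathlib

/-!
Expanding the kernel in its cosine series and exchanging the finite double sum with the series,
frequency `ℓ` contributes `|∑_{j=1}^{N-1} ω^{ℓj}|²` with `ω = e^{2πi/N}`, which is `(N-1)²` when
`N ∣ ℓ` and `1` otherwise. So the double sum is `B̃_{2s}(1)` plus `2N(N-2)` times the series
over the multiples of `N`. For `s ≥ 1` that series is at most `π²/(6N²)`, by comparison with
`ζ(2)`, while `B̃_{2s}(1)/(N-1)²` is of exact order `N⁻²`.
-/

open Real Finset

/-- The zonal Bessel kernel (constant term removed) on the unit circle, as a function of the
angle: `B̃_s(cos φ) = 2 Σ_{ℓ≥1} cos(ℓφ)/(1+ℓ²)^{s/2}`. -/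
noncomputable def circleBesselKernel (s : ℝ) (φ : ℝ) : ℝ :=
  2 * ∑' ℓ : ℕ, Real.cos (((ℓ : ℝ) + 1) * φ) / (1 + ((ℓ : ℝ) + 1) ^ 2) ^ (s / 2)

/-- Squared worst-case error for the `N`th roots of unity with the point `j = 0` removed,
via the reproducing-kernel formula. -/
noncomputable def wceSqRootsMinusOne (s : ℝ) (N : ℕ) : ℝ :=
  (1 / ((N : ℝ) - 1) ^ 2) * ∑ j ∈ Finset.Ico 1 N, ∑ k ∈ Finset.Ico 1 N,
    circleBesselKernel (2 * s) (2 * π * ((j : ℝ) - (k : ℝ)) / N)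

theorem IsPrimitiveRoot.geom_sum_pow_eq_ite {R : Type*} [CommRing R] [IsDomain R] {ζ : R} {N : ℕ}
    (hζ : IsPrimitiveRoot ζ N) (m : ℕ) :
    ∑ j ∈ range N, (ζ ^ m) ^ j = if N ∣ m then (N : R) else 0 := by
  split_ifs with hm
  · simp [(hζ.pow_eq_one_iff_dvd m).2 hm]
  · have hne : ζ ^ m - 1 ≠ 0 := sub_ne_zero.2 fun h => hm ((hζ.pow_eq_one_iff_dvd m).1 h)
    have hgeom := geom_sum_mul (ζ ^ m) N
    rw [pow_right_comm, hζ.pow_eq_one, one_pow, sub_self] at hgeom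
    exact (mul_eq_zero.1 hgeom).resolve_right hne

theorem Complex.sum_sum_re_mul_conj {ι : Type*} (s : Finset ι) (u : ι → ℂ) :
    ∑ j ∈ s, ∑ k ∈ s, (u j * (starRingEnd ℂ) (u k)).re = Complex.normSq (∑ j ∈ s, u j) := by
  rw [← Complex.ofReal_re (Complex.normSq _), ← Complex.mul_conj, map_sum, sum_mul_sum,
    Complex.re_sum]
  simp only [Complex.re_sum]

theorem sum_Ico_sum_Ico_cos_eq_ite {N : ℕ} (hN : N ≠ 0) (m : ℕ) :
    ∑ j ∈ Ico 1 N, ∑ k ∈ Ico 1 N, cos (m * (2 * π * ((j : ℝ) - k) / N)) =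
      if N ∣ m then ((N : ℝ) - 1) ^ 2 else 1 := by
  set u : ℕ → ℂ := fun j => (Complex.exp (2 * π * Complex.I / N) ^ m) ^ j
  have hcos (j k : ℕ) :
      cos (m * (2 * π * ((j : ℝ) - k) / N)) = (u j * (starRingEnd ℂ) (u k)).re := by
    rw [← Complex.exp_ofReal_mul_I_re]
    simp only [u, ← Complex.exp_nat_mul, ← Complex.exp_conj, map_div₀, map_mul,
      Complex.conj_ofReal, Complex.conj_I, map_ofNat, map_natCast, ← Complex.exp_add]
    congr 2
    push_cast
    ring
  have hsum : ∑ j ∈ Ico 1 N, u j = (if N ∣ m then (N : ℂ) else 0) - 1 := by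
    rw [sum_Ico_eq_sub _ (Nat.one_le_iff_ne_zero.2 hN),
      (Complex.isPrimitiveRoot_exp N hN).geom_sum_pow_eq_ite]
    simp [u]
  simp_rw [hcos]
  rw [Complex.sum_sum_re_mul_conj, hsum]
  split_ifs <;> simp [Complex.normSq_apply, sq]

theorem tsum_ite_dvd_succ {M : Type*} [AddCommMonoid M] [TopologicalSpace M] {N : ℕ}
    (hN : N ≠ 0) (g : ℕ → M) :
    ∑' ℓ, (if N ∣ ℓ + 1 then g (ℓ + 1) else 0) = ∑' ν, g (N * (ν + 1)) := by
  have hinj : Function.Injective fun ν => N * ν + (N - 1) := fun a b h => by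
    simpa [hN] using h
  rw [← hinj.tsum_eq]
  · refine tsum_congr fun ν => ?_
    have hsucc : N * ν + (N - 1) + 1 = N * (ν + 1) := by
      rw [mul_add_one]; omega
    simp [hsucc]
  · intro ℓ hℓ
    obtain ⟨k, hk⟩ : N ∣ ℓ + 1 := by
      by_contra h
      simp [h] at hℓ
    rcases k with _ | k
    · simp at hk
    · refine ⟨k, ?_⟩
      dsimp only
      rw [mul_add_one] at hk
      omega

theorem summable_one_add_sq_rpow_neg {s : ℝ} (hs : 1 / 2 < s) :
    Summable fun ℓ : ℕ => (1 + ((ℓ : ℝ) + 1) ^ 2) ^ (-s) := by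
  have hp : Summable fun ℓ : ℕ => ((ℓ : ℝ) + 1) ^ (-(2 * s)) := by
    simpa using (summable_nat_add_iff 1).2 (Real.summable_nat_rpow.2 (by linarith : -(2 * s) < -1))
  refine hp.of_nonneg_of_le (fun ℓ => by positivity) fun ℓ => ?_
  calc (1 + ((ℓ : ℝ) + 1) ^ 2) ^ (-s) ≤ (((ℓ : ℝ) + 1) ^ 2) ^ (-s) :=
        rpow_le_rpow_of_nonpos (by positivity) (by linarith) (by linarith)
    _ = ((ℓ : ℝ) + 1) ^ (-(2 * s)) := by
        rw [← rpow_natCast_mul (by positivity)]; push_cast; ring_nf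

theorem circleBesselKernel_two_mul (s φ : ℝ) :
    circleBesselKernel (2 * s) φ =
      2 * ∑' ℓ : ℕ, cos (((ℓ : ℝ) + 1) * φ) * (1 + ((ℓ : ℝ) + 1) ^ 2) ^ (-s) := by
  simp only [circleBesselKernel, mul_div_cancel_left₀ s two_ne_zero, div_eq_mul_inv]
  congr 2 with ℓ
  rw [rpow_neg (by positivity)]

theorem circleBesselKernel_zero_pos {s : ℝ} (hs : 1 / 2 < s) :
    0 < circleBesselKernel (2 * s) 0 := by
  rw [circleBesselKernel_two_mul]
  simp only [mul_zero, cos_zero, one_mul]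
  have := (summable_one_add_sq_rpow_neg hs).tsum_pos (fun ℓ => by positivity) 0 (by positivity)
  positivity

theorem sum_Ico_sum_Ico_tsum_cos_mul {N : ℕ} (hN : N ≠ 0) {g : ℕ → ℝ}
    (hg : Summable fun ℓ => g (ℓ + 1)) :
    ∑ j ∈ Ico 1 N, ∑ k ∈ Ico 1 N,
        ∑' ℓ : ℕ, cos (((ℓ : ℝ) + 1) * (2 * π * ((j : ℝ) - k) / N)) * g (ℓ + 1) =
      ∑' ℓ, g (ℓ + 1) + N * ((N : ℝ) - 2) * ∑' ν, g (N * (ν + 1)) := by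
  have hcos : ∀ θ : ℝ, Summable fun ℓ : ℕ => cos (((ℓ : ℝ) + 1) * θ) * g (ℓ + 1) := fun θ =>
    hg.abs.of_norm_bounded fun ℓ => by
      rw [norm_mul, norm_eq_abs]; exact mul_le_of_le_one_left (abs_nonneg _) (abs_cos_le_one _)
  have hdvd : Summable fun ℓ => if N ∣ ℓ + 1 then g (ℓ + 1) else 0 :=
    hg.abs.of_norm_bounded fun ℓ => by split_ifs <;> simp
  calc ∑ j ∈ Ico 1 N, ∑ k ∈ Ico 1 N,
        ∑' ℓ : ℕ, cos (((ℓ : ℝ) + 1) * (2 * π * ((j : ℝ) - k) / N)) * g (ℓ + 1)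
      = ∑' ℓ : ℕ, (∑ j ∈ Ico 1 N, ∑ k ∈ Ico 1 N,
          cos (((ℓ + 1 : ℕ) : ℝ) * (2 * π * ((j : ℝ) - k) / N))) * g (ℓ + 1) := by
        rw [sum_congr rfl fun j _ => (Summable.tsum_finsetSum fun k _ => hcos _).symm,
          ← Summable.tsum_finsetSum fun j _ => summable_sum fun k _ => hcos _]
        simp_rw [sum_mul]
        push_cast
        rfl
    _ = ∑' ℓ : ℕ, (g (ℓ + 1) + N * ((N : ℝ) - 2) * if N ∣ ℓ + 1 then g (ℓ + 1) else 0) := by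
        refine tsum_congr fun ℓ => ?_
        rw [sum_Ico_sum_Ico_cos_eq_ite hN]
        split_ifs <;> ring
    _ = ∑' ℓ, g (ℓ + 1) + N * ((N : ℝ) - 2) * ∑' ν, g (N * (ν + 1)) := by
        rw [hg.tsum_add (hdvd.mul_left _), tsum_mul_left, tsum_ite_dvd_succ hN]

theorem wceSqRootsMinusOne_eq {s : ℝ} (hs : 1 / 2 < s) {N : ℕ} (hN : N ≠ 0) :
    wceSqRootsMinusOne s N =
      (2 * (N : ℝ) * ((N : ℝ) - 2) / ((N : ℝ) - 1) ^ 2) *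
          ∑' ν : ℕ, (1 + ((ν : ℝ) + 1) ^ 2 * (N : ℝ) ^ 2) ^ (-s) +
        circleBesselKernel (2 * s) 0 / ((N : ℝ) - 1) ^ 2 := by
  have key := sum_Ico_sum_Ico_tsum_cos_mul hN (g := fun m : ℕ => (1 + (m : ℝ) ^ 2) ^ (-s))
    (by simpa using summable_one_add_sq_rpow_neg hs)
  have htail : ∑' ν : ℕ, (1 + ((N : ℝ) * ((ν : ℝ) + 1)) ^ 2) ^ (-s) =
      ∑' ν : ℕ, (1 + ((ν : ℝ) + 1) ^ 2 * (N : ℝ) ^ 2) ^ (-s) :=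
    tsum_congr fun ν => by ring_nf
  push_cast at key
  rw [htail] at key
  simp only [wceSqRootsMinusOne, circleBesselKernel_two_mul, mul_zero, cos_zero, one_mul,
    ← mul_sum, key]
  ring

theorem tsum_one_add_sq_mul_sq_rpow_neg_le {s : ℝ} (hs : 1 ≤ s) {N : ℕ} (hN : N ≠ 0) :
    ∑' ν : ℕ, (1 + ((ν : ℝ) + 1) ^ 2 * (N : ℝ) ^ 2) ^ (-s) ≤ π ^ 2 / 6 / (N : ℝ) ^ 2 := by
  have hzeta : HasSum (fun ν : ℕ => 1 / ((ν : ℝ) + 1) ^ 2) (π ^ 2 / 6) := by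
    simpa using (hasSum_nat_add_iff' 1).2 hasSum_zeta_two
  have hterm (ν : ℕ) : (1 + ((ν : ℝ) + 1) ^ 2 * (N : ℝ) ^ 2) ^ (-s) ≤
      1 / ((ν : ℝ) + 1) ^ 2 / (N : ℝ) ^ 2 := by
    have hx : 0 < ((ν : ℝ) + 1) ^ 2 * (N : ℝ) ^ 2 := by positivity
    calc (1 + ((ν : ℝ) + 1) ^ 2 * (N : ℝ) ^ 2) ^ (-s)
        ≤ (1 + ((ν : ℝ) + 1) ^ 2 * (N : ℝ) ^ 2) ^ (-1 : ℝ) :=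
          rpow_le_rpow_of_exponent_le (by linarith) (by linarith)
      _ ≤ (((ν : ℝ) + 1) ^ 2 * (N : ℝ) ^ 2)⁻¹ := by
          rw [rpow_neg_one]; exact inv_anti₀ hx (by linarith)
      _ = 1 / ((ν : ℝ) + 1) ^ 2 / (N : ℝ) ^ 2 := by rw [mul_inv, one_div, div_eq_mul_inv]
  calc ∑' ν : ℕ, (1 + ((ν : ℝ) + 1) ^ 2 * (N : ℝ) ^ 2) ^ (-s)
      ≤ ∑' ν : ℕ, 1 / ((ν : ℝ) + 1) ^ 2 / (N : ℝ) ^ 2 :=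
        (hzeta.summable.div_const _).of_nonneg_of_le (fun _ => by positivity) hterm
          |>.tsum_le_tsum hterm (hzeta.summable.div_const _)
    _ = π ^ 2 / 6 / (N : ℝ) ^ 2 := by rw [tsum_div_const, hzeta.tsum_eq]

theorem wceSqRootsMinusOne_bounds {s : ℝ} (hs : 1 ≤ s) {N : ℕ} (hN : 2 ≤ N) :
    circleBesselKernel (2 * s) 0 / (N : ℝ) ^ 2 ≤ wceSqRootsMinusOne s N ∧
      wceSqRootsMinusOne s N ≤ (π ^ 2 / 3 + 4 * circleBesselKernel (2 * s) 0) / (N : ℝ) ^ 2 := by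
  have hA := circleBesselKernel_zero_pos (by linarith : 1 / 2 < s)
  have hT := tsum_one_add_sq_mul_sq_rpow_neg_le hs (by omega : N ≠ 0)
  have hT0 : 0 ≤ ∑' ν : ℕ, (1 + ((ν : ℝ) + 1) ^ 2 * (N : ℝ) ^ 2) ^ (-s) :=
    tsum_nonneg fun _ => by positivity
  have hN2 : (2 : ℝ) ≤ N := by exact_mod_cast hN
  have hsq : 0 < ((N : ℝ) - 1) ^ 2 := by nlinarith
  have hcoef0 : 0 ≤ 2 * (N : ℝ) * ((N : ℝ) - 2) / ((N : ℝ) - 1) ^ 2 := by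
    apply div_nonneg <;> nlinarith
  have hcoef2 : 2 * (N : ℝ) * ((N : ℝ) - 2) / ((N : ℝ) - 1) ^ 2 ≤ 2 := by
    rw [div_le_iff₀ hsq]; nlinarith
  rw [wceSqRootsMinusOne_eq (by linarith) (by omega)]
  constructor
  · have hkernel : circleBesselKernel (2 * s) 0 / (N : ℝ) ^ 2 ≤
        circleBesselKernel (2 * s) 0 / ((N : ℝ) - 1) ^ 2 :=
      div_le_div_of_nonneg_left hA.le hsq (by nlinarith)
    nlinarith [mul_nonneg hcoef0 hT0]
  · have hkernel : circleBesselKernel (2 * s) 0 / ((N : ℝ) - 1) ^ 2 ≤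
        4 * circleBesselKernel (2 * s) 0 / (N : ℝ) ^ 2 := by
      have hN4 : (N : ℝ) ^ 2 ≤ 4 * ((N : ℝ) - 1) ^ 2 := by nlinarith
      rw [div_le_div_iff₀ hsq (by positivity)]
      nlinarith [mul_le_mul_of_nonneg_left hN4 hA.le]
    have htail : 2 * (N : ℝ) * ((N : ℝ) - 2) / ((N : ℝ) - 1) ^ 2 *
        ∑' ν : ℕ, (1 + ((ν : ℝ) + 1) ^ 2 * (N : ℝ) ^ 2) ^ (-s) ≤ 2 * (π ^ 2 / 6 / (N : ℝ) ^ 2) :=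
      mul_le_mul hcoef2 hT hT0 zero_le_two
    have hsplit : (π ^ 2 / 3 + 4 * circleBesselKernel (2 * s) 0) / (N : ℝ) ^ 2 =
        2 * (π ^ 2 / 6 / (N : ℝ) ^ 2) + 4 * circleBesselKernel (2 * s) 0 / (N : ℝ) ^ 2 := by ring
    linarith

theorem roots_of_unity_minus_one_wce (s : ℝ) (hs : 1 / 2 < s) :
    (∀ N : ℕ, 2 ≤ N →
      wceSqRootsMinusOne s N =
        (2 * (N : ℝ) * ((N : ℝ) - 2) / ((N : ℝ) - 1) ^ 2) *
            ∑' ν : ℕ, (1 + ((ν : ℝ) + 1) ^ 2 * (N : ℝ) ^ 2) ^ (-s) +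
          circleBesselKernel (2 * s) 0 / ((N : ℝ) - 1) ^ 2) ∧
    (1 < s → ∃ c C : ℝ, 0 < c ∧ c ≤ C ∧ ∀ N : ℕ, 3 ≤ N →
      c / N ≤ Real.sqrt (wceSqRootsMinusOne s N) ∧
      Real.sqrt (wceSqRootsMinusOne s N) ≤ C / N) := by
  refine ⟨fun N hN => wceSqRootsMinusOne_eq hs (by omega), fun hs1 => ?_⟩
  set A := circleBesselKernel (2 * s) 0
  have hA : 0 < A := circleBesselKernel_zero_pos hs
  refine ⟨√A, √(π ^ 2 / 3 + 4 * A), sqrt_pos.2 hA, sqrt_le_sqrt (by nlinarith [sq_nonneg π]),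
    fun N hN => ?_⟩
  have hsqrt (c : ℝ) : √(c / (N : ℝ) ^ 2) = √c / N := by
    rw [sqrt_div' _ (sq_nonneg _), sqrt_sq (Nat.cast_nonneg N)]
  obtain ⟨hlo, hhi⟩ := wceSqRootsMinusOne_bounds hs1.le (N := N) (by omega)
  exact ⟨hsqrt A ▸ sqrt_le_sqrt hlo, hsqrt _ ▸ sqrt_le_sqrt hhi⟩
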